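/- Let m ≥ 4 be an integer with 3 ∤ m. No nonzero linear combination over a field of characteristic 0 of the six monomials x^{m−1}y⁵z^{3m−2}, x^{4m−2}y⁴z^{m−1}, x^{2m−1}y²z^{4m−2}, x^{5m−2}yz^{2m−1}, x^{8m−3}, z^{7m−3} has all six second-order partial derivatives vanishing at the point (1,1,1). -/

import Mathlib

/-!
At `(1,1,1)` the second partials of `∑ c_r x^{a_r} y^{b_r} z^{d_r}` are the linear forms
`∑ c_r a_r b_r`, `∑ c_r a_r (a_r - 1)`, etc. in `c`. Neither `x^{8m-3}` nor `z^{7m-3}` involves `y`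
or two variables, so the `∂x∂y, ∂x∂z, ∂y², ∂y∂z` equations only see the first four coefficients;
their `4 × 4` determinant is `-(11424 m⁴ - 18812 m³ + 11592 m² - 3168 m + 324)`, which has no integer
root. With those four coefficients gone, `∂x²` and `∂z²` kill the remaining two.
-/

open MvPolynomial

/-- The exponent triples of the six monomials. -/
def expTriples (m : ℕ) : Fin 6 → ℕ × ℕ × ℕ :=
  ![(m - 1, 5, 3 * m - 2), (4 * m - 2, 4, m - 1), (2 * m - 1, 2, 4 * m - 2),
    (5 * m - 2, 1, 2 * m - 1), (8 * m - 3, 0, 0), (0, 0, 7 * m - 3)]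

/-- The six monomials `x^{m−1}y⁵z^{3m−2}, …, z^{7m−3}` in `k[x,y,z]`. -/
noncomputable def sixMonomials (k : Type*) [Field k] (m : ℕ) (r : Fin 6) :
    MvPolynomial (Fin 3) k :=
  X 0 ^ (expTriples m r).1 * X 1 ^ (expTriples m r).2.1 * X 2 ^ (expTriples m r).2.2

theorem eval_one_pderiv_pderiv_monomial {σ R : Type*} [CommRing R] [DecidableEq σ]
    (i j : σ) (s : σ →₀ ℕ) (a : R) :
    eval (fun _ => 1) (pderiv i (pderiv j (monomial s a))) =
      a * ((s j : R) * ((s i : R) - if i = j then 1 else 0)) := by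
  simp only [pderiv_monomial, eval_monomial, one_pow, Finsupp.prod, Finset.prod_const_one, mul_one,
    Finsupp.tsub_apply, Finsupp.single_apply]
  rcases eq_or_ne i j with rfl | hij
  · rcases Nat.eq_zero_or_pos (s i) with h | h
    · simp [h]
    · push_cast [if_pos rfl, Nat.cast_sub h]
      ring
  · simp [hij, hij.symm, mul_assoc]

noncomputable def expFinsupp (m : ℕ) (r : Fin 6) : Fin 3 →₀ ℕ :=
  .single 0 (expTriples m r).1 + .single 1 (expTriples m r).2.1 + .single 2 (expTriples m r).2.2

theorem sixMonomials_eq_monomial (k : Type*) [Field k] (m : ℕ) (r : Fin 6) :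
    sixMonomials k m r = monomial (expFinsupp m r) 1 := by
  simp [sixMonomials, expFinsupp, X_pow_eq_monomial, monomial_mul]

/-- `expTriples` with `m` replaced by `x`, free of truncated subtraction. -/
def expMatrix {R : Type*} [Ring R] (x : R) : Matrix (Fin 6) (Fin 3) R :=
  !![x - 1, 5, 3 * x - 2; 4 * x - 2, 4, x - 1; 2 * x - 1, 2, 4 * x - 2;
     5 * x - 2, 1, 2 * x - 1; 8 * x - 3, 0, 0; 0, 0, 7 * x - 3]

theorem natCast_expFinsupp {R : Type*} [Ring R] {m : ℕ} (hm : 1 ≤ m) (r : Fin 6) (i : Fin 3) :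
    (expFinsupp m r i : R) = expMatrix (m : R) r i := by
  fin_cases r <;> fin_cases i <;>
    simp (disch := omega) [expFinsupp, expTriples, expMatrix, Nat.cast_sub]

/-- The Hessian at `(1,1,1)` of `∑ c_r X^{e_r}`, `e_r` the `r`-th row of `expMatrix x`. -/
def hessianAtOne {R : Type*} [Ring R] (x : R) (c : Fin 6 → R) (s t : Fin 3) : R :=
  ∑ r, c r * (expMatrix x r t * (expMatrix x r s - if s = t then 1 else 0))

theorem eval_one_pderiv_pderiv_sum_sixMonomials {k : Type*} [Field k] {m : ℕ} (hm : 1 ≤ m)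
    (c : Fin 6 → k) (s t : Fin 3) :
    eval (fun _ => 1) (pderiv s (pderiv t (∑ r, C (c r) * sixMonomials k m r))) =
      hessianAtOne (m : k) c s t := by
  simp only [hessianAtOne, map_sum, sixMonomials_eq_monomial, C_mul_monomial, mul_one,
    eval_one_pderiv_pderiv_monomial, natCast_expFinsupp hm]

/-- Rows: the `∂x∂y, ∂x∂z, ∂y², ∂y∂z` equations; columns: the first four monomials. -/
def mixedHessianMatrix {R : Type*} [CommRing R] (x : R) : Matrix (Fin 4) (Fin 4) R :=
  !![5 * (x - 1), 4 * (4 * x - 2), 2 * (2 * x - 1), 5 * x - 2;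
     (3 * x - 2) * (x - 1), (x - 1) * (4 * x - 2), (4 * x - 2) * (2 * x - 1),
       (2 * x - 1) * (5 * x - 2);
     20, 12, 2, 0;
     5 * (3 * x - 2), 4 * (x - 1), 2 * (4 * x - 2), 2 * x - 1]

theorem mixedHessianMatrix_mulVec_eq_zero {R : Type*} [CommRing R] {x : R} {c : Fin 6 → R}
    (h : ∀ s t, hessianAtOne x c s t = 0) :
    (mixedHessianMatrix x).mulVec ![c 0, c 1, c 2, c 3] = 0 := by
  have h01 := h 0 1
  have h02 := h 0 2
  have h11 := h 1 1
  have h12 := h 1 2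
  simp only [hessianAtOne, Fin.sum_univ_six, expMatrix, Matrix.of_apply, Matrix.cons_val,
    Matrix.cons_val_zero, Matrix.cons_val_one, Fin.reduceEq, if_true, if_false] at h01 h02 h11 h12
  ext p
  fin_cases p <;>
    simp only [mixedHessianMatrix, Matrix.mulVec, dotProduct, Fin.sum_univ_four, Matrix.of_apply,
      Fin.zero_eta, Fin.mk_one, Fin.reduceFinMk, Matrix.cons_val, Matrix.cons_val_zero,
      Matrix.cons_val_one, Pi.zero_apply]
  · linear_combination h01
  · linear_combination h02
  · linear_combination h11
  · linear_combination h12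

theorem det_mixedHessianMatrix {R : Type*} [CommRing R] (x : R) :
    (mixedHessianMatrix x).det =
      -(11424 * x ^ 4 - 18812 * x ^ 3 + 11592 * x ^ 2 - 3168 * x + 324) := by
  rw [mixedHessianMatrix, Matrix.det_succ_row_zero]
  simp [Fin.sum_univ_succ, Matrix.det_fin_three, Fin.succAbove]
  ring

/-- The quartic dips below zero only between `0` and `1`. -/
theorem det_mixedHessianMatrix_natCast_pos (m : ℕ) :
    0 < (11424 * m ^ 4 - 18812 * m ^ 3 + 11592 * m ^ 2 - 3168 * m + 324 : ℤ) := by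
  rcases m with _ | n
  · norm_num
  · push_cast
    nlinarith [sq_nonneg (n : ℤ), pow_nonneg (Int.natCast_nonneg n) 3,
      pow_nonneg (Int.natCast_nonneg n) 4]

theorem natCast_mul_sub_natCast_ne_zero {R : Type*} [Ring R] [CharZero R] {a b m : ℕ}
    (h : a * m ≠ b) : (a * m - b : R) ≠ 0 :=
  sub_ne_zero.mpr (by exact_mod_cast h)

theorem eq_zero_of_forall_hessianAtOne_eq_zero {k : Type*} [Field k] [CharZero k] (m : ℕ)
    (c : Fin 6 → k) (h : ∀ s t, hessianAtOne (m : k) c s t = 0) : c = 0 := by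
  have hdet : (mixedHessianMatrix (m : k)).det ≠ 0 := by
    have hD := (Int.cast_ne_zero (α := k)).mpr (det_mixedHessianMatrix_natCast_pos m).ne'
    push_cast at hD
    rwa [det_mixedHessianMatrix, neg_ne_zero]
  have hc03 := Matrix.eq_zero_of_mulVec_eq_zero hdet (mixedHessianMatrix_mulVec_eq_zero h)
  have e0 : c 0 = 0 := congrFun hc03 0
  have e1 : c 1 = 0 := congrFun hc03 1
  have e2 : c 2 = 0 := congrFun hc03 2
  have e3 : c 3 = 0 := congrFun hc03 3
  have h00 := h 0 0
  have h22 := h 2 2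
  simp only [hessianAtOne, Fin.sum_univ_six, expMatrix, Matrix.of_apply, Matrix.cons_val,
    Matrix.cons_val_zero, Matrix.cons_val_one, if_true, e0, e1, e2, e3] at h00 h22
  have e4 : c 4 = 0 := by
    refine (mul_eq_zero.mp ?_).resolve_left <| mul_ne_zero
      (natCast_mul_sub_natCast_ne_zero (by omega : 8 * m ≠ 3))
      (natCast_mul_sub_natCast_ne_zero (by omega : 8 * m ≠ 4))
    linear_combination h00
  have e5 : c 5 = 0 := by
    refine (mul_eq_zero.mp ?_).resolve_left <| mul_ne_zero
      (natCast_mul_sub_natCast_ne_zero (by omega : 7 * m ≠ 3))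
      (natCast_mul_sub_natCast_ne_zero (by omega : 7 * m ≠ 4))
    linear_combination h22
  ext r
  fin_cases r <;> assumption

theorem stmt9_general (k : Type*) [Field k] [CharZero k] (m : ℕ) (hm : 4 ≤ m)
    (c : Fin 6 → k) (hc : c ≠ 0) :
    ¬ (∀ s t : Fin 3,
        eval (fun _ => (1 : k))
          (pderiv s (pderiv t (∑ r : Fin 6, C (c r) * sixMonomials k m r))) = 0) := by
  intro h
  refine hc (eq_zero_of_forall_hessianAtOne_eq_zero m c fun s t => ?_)
  rw [← eval_one_pderiv_pderiv_sum_sixMonomials (by omega : 1 ≤ m)]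
  exact h s t

/-- Over a field of characteristic 0, no nonzero linear combination of the six monomials has
all six second-order partial derivatives vanishing at `(1,1,1)` (for `m ≥ 4`, `3 ∤ m`). -/
theorem stmt9 (k : Type*) [Field k] [CharZero k] (m : ℕ) (hm : 4 ≤ m) (h3 : ¬ (3 ∣ m))
    (c : Fin 6 → k) (hc : c ≠ 0) :
    ¬ (∀ s t : Fin 3,
        eval (fun _ => (1 : k))
          (pderiv s (pderiv t (∑ r : Fin 6, C (c r) * sixMonomials k m r))) = 0) :=
  stmt9_general k m hm c hc
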